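/- arXiv:2311.07607 — 2 statements merged into one kernel-verified Lean document; each statement's English description precedes it below -/
import Mathlib

section
/- Let p and q be probability distributions on a finite set S with q having full support on S, of the form p_i = exp(u_i)/Σ_{j∈S} exp(u_j) and q_i = exp(v_i)/Σ_{j∈S} exp(v_j) for vectors u, v. Then KL(p‖q) ≤ 2·max_{i∈S} |u_i − v_i|. -/
open Finset Real

/-- KL divergence between two softmax distributions on a finite set `S` is at
most twice the sup-norm distance between the score vectors on `S`. -/
theorem kl_softmax_le_two_mul_max {n : ℕ} (S : Finset (Fin n)) (hS : S.Nonempty)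
    (u v : Fin n → ℝ) (p q : Fin n → ℝ)
    (hp : ∀ i ∈ S, p i = Real.exp (u i) / ∑ j ∈ S, Real.exp (u j))
    (hq : ∀ i ∈ S, q i = Real.exp (v i) / ∑ j ∈ S, Real.exp (v j)) :
    ∑ i ∈ S, p i * Real.log (p i / q i) ≤ 2 * S.sup' hS (fun i => |u i - v i|) := by
  set M := S.sup' hS (fun i => |u i - v i|) with hM
  set Zu := ∑ j ∈ S, Real.exp (u j) with hZu
  set Zv := ∑ j ∈ S, Real.exp (v j) with hZv
  have hZu_pos : 0 < Zu := Finset.sum_pos (fun j _ => Real.exp_pos _) hS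
  have hZv_pos : 0 < Zv := Finset.sum_pos (fun j _ => Real.exp_pos _) hS
  have hMle : ∀ i ∈ S, |u i - v i| ≤ M := fun i hi => Finset.le_sup' (fun i => |u i - v i|) hi
  have hppos : ∀ i ∈ S, 0 < p i := by
    intro i hi; rw [hp i hi]; exact div_pos (Real.exp_pos _) hZu_pos
  have hpsum : ∑ i ∈ S, p i = 1 := by
    rw [Finset.sum_congr rfl hp, ← Finset.sum_div, div_self hZu_pos.ne']
  have hterm : ∀ i ∈ S, p i * Real.log (p i / q i)
      = p i * ((u i - v i) + (Real.log Zv - Real.log Zu)) := by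
    intro i hi
    rw [hp i hi, hq i hi]
    congr 1
    rw [Real.log_div (div_pos (Real.exp_pos _) hZu_pos).ne'
        (div_pos (Real.exp_pos _) hZv_pos).ne',
      Real.log_div (Real.exp_pos _).ne' hZu_pos.ne',
      Real.log_div (Real.exp_pos _).ne' hZv_pos.ne', Real.log_exp, Real.log_exp]
    ring
  have hlogZ : Real.log Zv - Real.log Zu ≤ M := by
    have hZvle : Zv ≤ Real.exp M * Zu := by
      rw [hZv, hZu, Finset.mul_sum]
      refine Finset.sum_le_sum fun j hj => ?_
      rw [← Real.exp_add]
      exact Real.exp_le_exp.2 (by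
        have := (abs_le.1 (hMle j hj)).1; linarith)
    have : Real.log Zv ≤ Real.log (Real.exp M * Zu) :=
      Real.log_le_log hZv_pos hZvle
    rw [Real.log_mul (Real.exp_pos _).ne' hZu_pos.ne', Real.log_exp] at this
    linarith
  calc ∑ i ∈ S, p i * Real.log (p i / q i)
      = ∑ i ∈ S, p i * ((u i - v i) + (Real.log Zv - Real.log Zu)) :=
        Finset.sum_congr rfl hterm
    _ ≤ ∑ i ∈ S, p i * (M + M) := by
        refine Finset.sum_le_sum fun i hi => ?_
        refine mul_le_mul_of_nonneg_left ?_ (hppos i hi).le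
        have h1 : u i - v i ≤ M := (abs_le.1 (hMle i hi)).2
        linarith
    _ = 2 * M := by rw [← Finset.sum_mul, hpsum]; ring
end

section
/- Let H, H' ∈ ℝ^{m×m} be matrices with zero diagonal whose off-diagonal entries all lie in {−δ, δ}, and let a_1,…,a_n be nonzero assortments. Then the KL divergence between the joint distributions of the n independent Halo MNL choices under H and under H' is at most 2nδ·d_ham(H,H'), where d_ham(H,H') is the number of entries on which H and H' differ. -/
open Matrix Real Finset
open scoped Classical

/-- Joint KL divergence of `n` independent Halo MNL choices under two sign
matrices is at most `2 n δ` times the Hamming distance of the matrices. -/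
theorem halo_mnl_joint_kl_le (m n : ℕ) (δ : ℝ) (hδ : 0 < δ)
    (H H' : Matrix (Fin m) (Fin m) ℝ)
    (hHdiag : ∀ i, H i i = 0) (hH'diag : ∀ i, H' i i = 0)
    (hHoff : ∀ i j, i ≠ j → H i j = δ ∨ H i j = -δ)
    (hH'off : ∀ i j, i ≠ j → H' i j = δ ∨ H' i j = -δ)
    (a : Fin n → Fin m → ℝ)
    (ha01 : ∀ t k, a t k = 0 ∨ a t k = 1) (hne : ∀ t, ∃ k, a t k = 1)
    (P P' : (Fin n → Fin m) → ℝ)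
    (hP : ∀ c, P c = ∏ t, a t (c t) * Real.exp (H.mulVec (a t) (c t)) /
        ∑ l, a t l * Real.exp (H.mulVec (a t) l))
    (hP' : ∀ c, P' c = ∏ t, a t (c t) * Real.exp (H'.mulVec (a t) (c t)) /
        ∑ l, a t l * Real.exp (H'.mulVec (a t) l)) :
    ∑ c : Fin n → Fin m, P c * Real.log (P c / P' c)
      ≤ 2 * n * δ * ((Finset.univ.filter
          (fun ij : Fin m × Fin m => H ij.1 ij.2 ≠ H' ij.1 ij.2)).card : ℝ) := by
  -- notation
  set D : Finset (Fin m × Fin m) :=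
    Finset.univ.filter (fun ij : Fin m × Fin m => H ij.1 ij.2 ≠ H' ij.1 ij.2) with hD
  set d : ℝ := (D.card : ℝ) with hd
  have hd0 : 0 ≤ d := by positivity
  -- row-wise differing counts
  set dr : Fin m → ℕ := fun l => (Finset.univ.filter (fun k => H l k ≠ H' l k)).card with hdr
  have hdsum : (D.card : ℕ) = ∑ l, dr l := by
    rw [hD, hdr, Finset.card_filter, Fintype.sum_prod_type]
    simp [Finset.card_filter]
  have hdrle : ∀ l, (dr l : ℝ) ≤ d := by
    intro l
    rw [hd]
    have : dr l ≤ D.card := by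
      rw [hdsum]
      exact Finset.single_le_sum (f := fun l => dr l) (fun _ _ => Nat.zero_le _) (Finset.mem_univ l)
    exact_mod_cast this
  have hdr2 : ∀ l l', l ≠ l' → (dr l : ℝ) + (dr l' : ℝ) ≤ d := by
    intro l l' hll
    rw [hd]
    have : dr l + dr l' ≤ D.card := by
      rw [hdsum]
      calc dr l + dr l' = ∑ x ∈ ({l, l'} : Finset (Fin m)), dr x := by
            rw [Finset.sum_pair hll]
        _ ≤ ∑ x, dr x := Finset.sum_le_sum_of_subset (Finset.subset_univ _)
    exact_mod_cast this
  -- entrywise bound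
  have hentry : ∀ l k, |H l k - H' l k| ≤ if H l k ≠ H' l k then 2 * δ else 0 := by
    intro l k
    by_cases h : H l k = H' l k
    · simp [h]
    · simp only [h, if_pos, ne_eq, not_false_eq_true, if_true]
      rcases eq_or_ne l k with rfl | hlk
      · exact absurd (by rw [hHdiag, hH'diag]) h
      · rcases hHoff l k hlk with h1 | h1 <;> rcases hH'off l k hlk with h2 | h2 <;>
          rw [h1, h2] <;> [skip; skip; skip; skip] <;>
          simp_all <;> rw [abs_le] <;> constructor <;> nlinarith
  -- row bound on mulVec differences
  have hrow : ∀ t l, |H.mulVec (a t) l - H'.mulVec (a t) l| ≤ 2 * δ * (dr l : ℝ) := by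
    intro t l
    have ha1 : ∀ k, |a t k| ≤ 1 := by
      intro k; rcases ha01 t k with h | h <;> simp [h]
    simp only [Matrix.mulVec, dotProduct]
    rw [← Finset.sum_sub_distrib]
    calc |∑ k, (H l k * a t k - H' l k * a t k)| ≤ ∑ k, |H l k * a t k - H' l k * a t k| :=
          Finset.abs_sum_le_sum_abs _ _
      _ ≤ ∑ k, (if H l k ≠ H' l k then 2 * δ else 0) := by
          apply Finset.sum_le_sum
          intro k _
          rw [← sub_mul, abs_mul]
          calc |H l k - H' l k| * |a t k| ≤ |H l k - H' l k| * 1 :=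
                mul_le_mul_of_nonneg_left (ha1 k) (abs_nonneg _)
            _ = |H l k - H' l k| := mul_one _
            _ ≤ _ := hentry l k
      _ = 2 * δ * (dr l : ℝ) := by
          rw [← Finset.sum_filter, Finset.sum_const, nsmul_eq_mul]
          rw [hdr]
          ring
  -- partition functions
  set Z : Fin n → ℝ := fun t => ∑ l, a t l * Real.exp (H.mulVec (a t) l) with hZ
  set Z' : Fin n → ℝ := fun t => ∑ l, a t l * Real.exp (H'.mulVec (a t) l) with hZ'
  have hZnonneg : ∀ (M : Matrix (Fin m) (Fin m) ℝ) t,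
      0 < ∑ l, a t l * Real.exp (M.mulVec (a t) l) := by
    intro M t
    obtain ⟨k, hk⟩ := hne t
    apply Finset.sum_pos' (fun l _ => by
      rcases ha01 t l with h | h <;> simp [h] <;> positivity)
    exact ⟨k, Finset.mem_univ k, by rw [hk]; simpa using Real.exp_pos _⟩
  have hZpos : ∀ t, 0 < Z t := fun t => hZnonneg H t
  have hZ'pos : ∀ t, 0 < Z' t := fun t => hZnonneg H' t
  -- probabilities q t j
  set q : Fin n → Fin m → ℝ := fun t j => a t j * Real.exp (H.mulVec (a t) j) / Z t with hq
  have hqnonneg : ∀ t j, 0 ≤ q t j := by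
    intro t j
    rcases ha01 t j with h | h
    · simp [hq, h]
    · rw [hq]; simp only [h, one_mul]
      exact (div_pos (Real.exp_pos _) (hZpos t)).le
  have hqsum : ∀ t, ∑ j, q t j = 1 := by
    intro t
    rw [hq]
    simp only
    rw [← Finset.sum_div]
    exact div_self (ne_of_gt (hZpos t))
  have hPsum : ∑ c : Fin n → Fin m, P c = 1 := by
    have : ∑ c : Fin n → Fin m, P c = ∑ c : Fin n → Fin m, ∏ t, q t (c t) := by
      apply Finset.sum_congr rfl
      intro c _
      rw [hP c]
    rw [this, ← Fintype.prod_sum]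
    simp [hqsum]
  have hPnonneg : ∀ c, 0 ≤ P c := by
    intro c
    rw [hP c]
    apply Finset.prod_nonneg
    intro t _
    have := hqnonneg t (c t)
    rw [hq] at this
    exact this
  -- pointwise bound
  have hpoint : ∀ c : Fin n → Fin m,
      P c * Real.log (P c / P' c) ≤ P c * (2 * n * δ * d) := by
    intro c
    rcases eq_or_lt_of_le (hPnonneg c) with h0 | hpos
    · rw [← h0]; simp
    -- P c > 0 forces a t (c t) = 1 for all t
    have hact : ∀ t, a t (c t) = 1 := by
      intro t
      by_contra hne1
      rcases ha01 t (c t) with h | h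
      · rw [hP c] at hpos
        have : (∏ t, a t (c t) * Real.exp (H.mulVec (a t) (c t)) /
            ∑ l, a t l * Real.exp (H.mulVec (a t) l)) = 0 := by
          apply Finset.prod_eq_zero (Finset.mem_univ t)
          rw [h]; simp
        rw [this] at hpos
        exact lt_irrefl _ hpos
      · exact hne1 h
    -- key per-transaction inequality
    have hkey : ∀ t, H.mulVec (a t) (c t) - H'.mulVec (a t) (c t)
        + Real.log (Z' t) - Real.log (Z t) ≤ 2 * δ * d := by
      intro t
      have hmain : Real.exp (H.mulVec (a t) (c t) - H'.mulVec (a t) (c t)) * Z' t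
          ≤ Real.exp (2 * δ * d) * Z t := by
        rw [hZ', hZ]
        simp only
        rw [Finset.mul_sum, Finset.mul_sum]
        apply Finset.sum_le_sum
        intro l _
        rcases ha01 t l with h | h
        · simp [h]
        · rw [h, one_mul, one_mul, ← Real.exp_add, ← Real.exp_add]
          apply Real.exp_le_exp.mpr
          rcases eq_or_ne l (c t) with rfl | hlc
          · have : 0 ≤ 2 * δ * d := by positivity
            linarith
          · have h1 := hrow t l
            have h2 := hrow t (c t)
            have h3 := hdr2 l (c t) hlc
            rw [abs_le] at h1 h2
            nlinarith [hδ.le]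
      have h1 : Real.exp (H.mulVec (a t) (c t) - H'.mulVec (a t) (c t)) * Z' t > 0 :=
        mul_pos (Real.exp_pos _) (hZ'pos t)
      have := Real.log_le_log h1 hmain
      rw [Real.log_mul (ne_of_gt (Real.exp_pos _)) (ne_of_gt (hZ'pos t)),
        Real.log_mul (ne_of_gt (Real.exp_pos _)) (ne_of_gt (hZpos t)),
        Real.log_exp, Real.log_exp] at this
      linarith
    -- compute log (P c / P' c)
    have hP'pos : 0 < P' c := by
      rw [hP' c]
      apply Finset.prod_pos
      intro t _
      rw [hact t, one_mul]
      exact div_pos (Real.exp_pos _) (hZ'pos t)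
    have hlog : Real.log (P c / P' c) = ∑ t, (H.mulVec (a t) (c t) - H'.mulVec (a t) (c t)
        + Real.log (Z' t) - Real.log (Z t)) := by
      rw [hP c, hP' c]
      rw [← Finset.prod_div_distrib]
      rw [Real.log_prod]
      · apply Finset.sum_congr rfl
        intro t _
        rw [hact t, one_mul, one_mul]
        rw [div_div_div_comm]
        rw [Real.log_div (ne_of_gt (div_pos (Real.exp_pos _) (Real.exp_pos _)))
          (ne_of_gt (div_pos (hZpos t) (hZ'pos t)))]
        rw [Real.log_div (ne_of_gt (Real.exp_pos _)) (ne_of_gt (Real.exp_pos _))]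
        rw [Real.log_div (ne_of_gt (hZpos t)) (ne_of_gt (hZ'pos t))]
        rw [Real.log_exp, Real.log_exp]
        ring
      · intro t _
        rw [hact t, one_mul, one_mul, div_div_div_comm]
        apply ne_of_gt
        apply div_pos (div_pos (Real.exp_pos _) (Real.exp_pos _))
        exact div_pos (hZpos t) (hZ'pos t)
    apply mul_le_mul_of_nonneg_left _ (hPnonneg c)
    rw [hlog]
    calc ∑ t, (H.mulVec (a t) (c t) - H'.mulVec (a t) (c t)
          + Real.log (Z' t) - Real.log (Z t)) ≤ ∑ _t : Fin n, 2 * δ * d :=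
          Finset.sum_le_sum (fun t _ => hkey t)
      _ = 2 * n * δ * d := by
          rw [Finset.sum_const, Finset.card_univ, Fintype.card_fin, nsmul_eq_mul]
          ring
  calc ∑ c : Fin n → Fin m, P c * Real.log (P c / P' c)
      ≤ ∑ c : Fin n → Fin m, P c * (2 * n * δ * d) := Finset.sum_le_sum (fun c _ => hpoint c)
    _ = 2 * n * δ * d := by rw [← Finset.sum_mul, hPsum, one_mul]
end
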